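/- For the monomial μ(y) = (y₁/h)^{α₁} (y₂/h)^{α₂} with α₁, α₂ nonnegative even integers, the operator value B(0, τ)μ = (τ/2π) ∫_{|z|<1} μ(cτz)/√(1-|z|²) dz equals τ/(α₁+α₂+1) times (α₁-1)!!(α₂-1)!!/(α₁+α₂-1)!! · λ^{α₁+α₂}, where λ = cτ/h. -/

import Mathlib

/-!
In polar coordinates the integrand `z₁^(2p) z₂^(2q) / √(1 - |z|²)` over the unit disk splits into
a radial integral `∫₀¹ r^(2p+2q+1) / √(1 - r²) dr`, which the substitution `r = sin u` turns into
the Wallis integral `(2p+2q)‼ / (2p+2q+1)‼`, and an angular integral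
`∫_{-π}^{π} cos^(2p) sin^(2q) = 2π (2p-1)‼ (2q-1)‼ / (2p+2q)‼`, obtained by integration by parts in
the power of `sin`. The factor `(c τ / h)^(2p+2q)` comes out of the integral by homogeneity.
-/

open MeasureTheory Real Nat

/-- The operator B(x,τ)f = (τ/2π) ∫_{|z|<1} f(x+cτz)/√(1-|z|²) dz. -/
noncomputable def Bop (c τ : ℝ) (x : ℝ × ℝ) (f : ℝ × ℝ → ℝ) : ℝ :=
  (τ / (2 * Real.pi)) * ∫ z in {z : ℝ × ℝ | z.1 ^ 2 + z.2 ^ 2 < 1},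
    f (x.1 + c * τ * z.1, x.2 + c * τ * z.2) / Real.sqrt (1 - (z.1 ^ 2 + z.2 ^ 2))

lemma integral_cos_pow_two_mul_neg_pi_pi (p : ℕ) :
    ∫ θ in (-π)..π, cos θ ^ (2 * p) = 2 * π * (2 * p - 1)‼ / (2 * p)‼ := by
  induction p with
  | zero => simp; ring
  | succ p ih =>
    rw [mul_add_one, integral_cos_pow, ih, show 2 * p + 2 - 1 = 2 * p + 1 by omega,
      doubleFactorial_add_one, doubleFactorial_add_two]
    simp only [sin_pi, sin_neg, neg_zero, mul_zero, sub_zero, zero_div, zero_add]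
    push_cast
    field_simp

lemma integral_cos_pow_mul_sin_pow_add_two_neg_pi_pi (a b : ℕ) :
    ∫ θ in (-π)..π, cos θ ^ a * sin θ ^ (b + 2) =
      (b + 1) / (a + b + 2) * ∫ θ in (-π)..π, cos θ ^ a * sin θ ^ b := by
  have hint : ∀ m n : ℕ, IntervalIntegrable (fun θ => cos θ ^ m * sin θ ^ n) volume (-π) π :=
    fun m n => by apply Continuous.intervalIntegrable; fun_prop
  -- integrate the derivative of `cos ^ (a + 1) * sin ^ (b + 1)`, which vanishes at `± π`
  have hderiv : ∀ θ ∈ Set.uIcc (-π) π, HasDerivAt (fun t => cos t ^ (a + 1) * sin t ^ (b + 1))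
      ((b + 1) * (cos θ ^ a * sin θ ^ b) - (a + b + 2) * (cos θ ^ a * sin θ ^ (b + 2))) θ := by
    intro θ _
    refine (((hasDerivAt_cos θ).pow (a + 1)).mul ((hasDerivAt_sin θ).pow (b + 1))).congr_deriv ?_
    simp only [Pi.pow_apply, add_tsub_cancel_right]
    push_cast
    linear_combination ((b : ℝ) + 1) * cos θ ^ a * sin θ ^ b * sin_sq_add_cos_sq θ
  have hFTC := intervalIntegral.integral_eq_sub_of_hasDerivAt hderiv
    (((hint a b).const_mul _).sub ((hint a (b + 2)).const_mul _))
  rw [intervalIntegral.integral_sub ((hint a b).const_mul _) ((hint a (b + 2)).const_mul _),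
    intervalIntegral.integral_const_mul, intervalIntegral.integral_const_mul] at hFTC
  simp only [sin_pi, sin_neg, neg_zero, zero_pow (succ_ne_zero b), mul_zero, sub_zero] at hFTC
  field_simp
  linarith

lemma integral_cos_pow_mul_sin_pow_even_neg_pi_pi (p q : ℕ) :
    ∫ θ in (-π)..π, cos θ ^ (2 * p) * sin θ ^ (2 * q) =
      2 * π * ((2 * p - 1)‼ * (2 * q - 1)‼) / (2 * p + 2 * q)‼ := by
  induction q with
  | zero => simp [integral_cos_pow_two_mul_neg_pi_pi]
  | succ q ih =>
    rw [mul_add_one, integral_cos_pow_mul_sin_pow_add_two_neg_pi_pi, ih,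
      show 2 * q + 2 - 1 = 2 * q + 1 by omega, doubleFactorial_add_one, ← add_assoc,
      doubleFactorial_add_two]
    push_cast
    field_simp

lemma setIntegral_Ioo_mul_inv_sqrt_one_sub_sq (f : ℝ → ℝ) :
    ∫ r in Set.Ioo 0 1, f r * (√(1 - r ^ 2))⁻¹ = ∫ u in Set.Ioo 0 (π / 2), f (sin u) := by
  have hmono : StrictMonoOn sin (Set.Icc 0 (π / 2)) :=
    strictMonoOn_sin.mono (Set.Icc_subset_Icc (by linarith [pi_pos]) le_rfl)
  have himage : sin '' Set.Ioo 0 (π / 2) = Set.Ioo 0 1 := by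
    rw [continuous_sin.continuousOn.image_Ioo_of_strictMonoOn (by positivity) hmono, sin_zero,
      sin_pi_div_two]
  rw [← himage, integral_image_eq_integral_abs_deriv_smul measurableSet_Ioo
    (fun u _ => (hasDerivAt_sin u).hasDerivWithinAt) (hmono.injOn.mono Set.Ioo_subset_Icc_self)]
  refine setIntegral_congr_fun measurableSet_Ioo fun u hu => ?_
  have hcos : 0 < cos u := cos_pos_of_mem_Ioo ⟨by linarith [hu.1, pi_pos], hu.2⟩
  rw [smul_eq_mul, ← cos_sq', sqrt_sq hcos.le, abs_of_pos hcos]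
  field_simp

lemma integral_sin_pow_two_mul_add_one_zero_pi_div_two (n : ℕ) :
    ∫ u in 0..π / 2, sin u ^ (2 * n + 1) = (2 * n)‼ / (2 * n + 1)‼ := by
  induction n with
  | zero => simp
  | succ n ih =>
    rw [show 2 * (n + 1) + 1 = 2 * n + 1 + 2 by ring, integral_sin_pow, ih, mul_add_one,
      doubleFactorial_add_two, doubleFactorial_add_two]
    simp only [sin_zero, cos_pi_div_two, zero_pow (succ_ne_zero _), zero_mul, mul_zero, sub_zero,
      zero_div, zero_add]
    push_cast
    field_simp
    ring

lemma setIntegral_Ioo_pow_odd_mul_inv_sqrt_one_sub_sq (n : ℕ) :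
    ∫ r in Set.Ioo 0 1, r ^ (2 * n + 1) * (√(1 - r ^ 2))⁻¹ = (2 * n)‼ / (2 * n + 1)‼ := by
  rw [setIntegral_Ioo_mul_inv_sqrt_one_sub_sq, ← integral_sin_pow_two_mul_add_one_zero_pi_div_two,
    intervalIntegral.integral_of_le (by positivity), integral_Ioc_eq_integral_Ioo]

lemma setIntegral_unitDisk_pow_mul_pow_mul (a b : ℕ) (w : ℝ → ℝ) :
    ∫ z in {z : ℝ × ℝ | z.1 ^ 2 + z.2 ^ 2 < 1}, z.1 ^ a * z.2 ^ b * w (z.1 ^ 2 + z.2 ^ 2) =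
      (∫ r in Set.Ioo 0 1, r ^ (a + b + 1) * w (r ^ 2)) *
        ∫ θ in (-π)..π, cos θ ^ a * sin θ ^ b := by
  set D : Set (ℝ × ℝ) := {z | z.1 ^ 2 + z.2 ^ 2 < 1}
  have hD : MeasurableSet D := (isOpen_lt (by fun_prop) continuous_const).measurableSet
  set R : ℝ → ℝ := fun r => r ^ (a + b + 1) * w (r ^ 2)
  have hpolar : ∀ x ∈ polarCoord.target,
      x.1 • D.indicator (fun z => z.1 ^ a * z.2 ^ b * w (z.1 ^ 2 + z.2 ^ 2)) (polarCoord.symm x) =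
        (Set.Ioo 0 1).indicator R x.1 * (cos x.2 ^ a * sin x.2 ^ b) := by
    rintro ⟨r, θ⟩ ⟨hr, -⟩
    have hr : 0 < r := hr
    have hnorm : (r * cos θ) ^ 2 + (r * sin θ) ^ 2 = r ^ 2 := by
      linear_combination r ^ 2 * cos_sq_add_sin_sq θ
    have hmem : polarCoord.symm (r, θ) ∈ D ↔ r ∈ Set.Ioo 0 1 := by
      simp only [polarCoord_symm_apply, D, Set.mem_ofPred_eq, hnorm, Set.mem_Ioo, hr, true_and]
      exact sq_lt_one_iff₀ hr.le
    by_cases hr1 : r ∈ Set.Ioo 0 1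
    · rw [Set.indicator_of_mem (hmem.2 hr1), Set.indicator_of_mem hr1, polarCoord_symm_apply,
        smul_eq_mul, hnorm]
      ring
    · rw [Set.indicator_of_notMem (hmem.not.2 hr1), Set.indicator_of_notMem hr1]
      simp
  rw [← integral_indicator hD, ← integral_comp_polarCoord_symm,
    setIntegral_congr_fun polarCoord.open_target.measurableSet hpolar, polarCoord_target,
    Measure.volume_eq_prod,
    setIntegral_prod_mul ((Set.Ioo 0 1).indicator R) (fun θ => cos θ ^ a * sin θ ^ b),
    setIntegral_indicator measurableSet_Ioo,
    Set.inter_eq_self_of_subset_right Set.Ioo_subset_Ioi_self,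
    intervalIntegral.integral_of_le (by linarith [pi_pos]), integral_Ioc_eq_integral_Ioo]

lemma Bop_zero_div_pow_mul_div_pow (c τ h : ℝ) (a b : ℕ) :
    Bop c τ (0, 0) (fun y => (y.1 / h) ^ a * (y.2 / h) ^ b) =
      τ / (2 * π) * (c * τ / h) ^ (a + b) *
        ∫ z in {z : ℝ × ℝ | z.1 ^ 2 + z.2 ^ 2 < 1},
          z.1 ^ a * z.2 ^ b * (√(1 - (z.1 ^ 2 + z.2 ^ 2)))⁻¹ := by
  rw [Bop, mul_assoc, ← integral_const_mul ((c * τ / h) ^ (a + b))]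
  congr 2 with z
  simp only
  ring

theorem Bop_monomial_even_general (c τ h : ℝ)
    (α₁ α₂ : ℕ) (h₁ : Even α₁) (h₂ : Even α₂) :
    Bop c τ (0, 0) (fun y => (y.1 / h) ^ α₁ * (y.2 / h) ^ α₂) =
      τ / (α₁ + α₂ + 1) *
        (((α₁ - 1)‼ * (α₂ - 1)‼ : ℝ) / ((α₁ + α₂ - 1)‼ : ℝ) * (c * τ / h) ^ (α₁ + α₂)) := by
  obtain ⟨p, rfl⟩ := h₁
  obtain ⟨q, rfl⟩ := h₂
  simp only [← two_mul]
  rw [Bop_zero_div_pow_mul_div_pow, setIntegral_unitDisk_pow_mul_pow_mul _ _ fun s => (√(1 - s))⁻¹,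
    ← mul_add, setIntegral_Ioo_pow_odd_mul_inv_sqrt_one_sub_sq,
    integral_cos_pow_mul_sin_pow_even_neg_pi_pi, mul_add, doubleFactorial_add_one]
  push_cast
  field_simp

/-- B(0,τ)μ for μ(y) = (y₁/h)^α₁ (y₂/h)^α₂ with α₁,α₂ even equals
τ/(α₁+α₂+1) · (α₁-1)!!(α₂-1)!!/(α₁+α₂-1)!! · λ^{α₁+α₂}, λ = cτ/h. -/
theorem Bop_monomial_even (c τ h : ℝ) (hc : 0 < c) (hτ : 0 < τ) (hh : 0 < h)
    (α₁ α₂ : ℕ) (h₁ : Even α₁) (h₂ : Even α₂) :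
    Bop c τ (0, 0) (fun y => (y.1 / h) ^ α₁ * (y.2 / h) ^ α₂) =
      τ / (α₁ + α₂ + 1) *
        (((α₁ - 1)‼ * (α₂ - 1)‼ : ℝ) / ((α₁ + α₂ - 1)‼ : ℝ) * (c * τ / h) ^ (α₁ + α₂)) :=
  Bop_monomial_even_general c τ h α₁ α₂ h₁ h₂
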